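/- arXiv:1910.13668 — 3 statements merged into one kernel-verified Lean document; each statement's English description precedes it below -/
import Mathlib

section
/- Let n ≥ 2, 1 ≤ j ≤ n and 0 < ε ≤ 1/n, and define c^{(j,ε)} ∈ Δ_n by c^{(j,ε)}_j = ε and c^{(j,ε)}_i = (1−ε)/(n−1) for i ≠ j. If p ∈ Δ̄_n satisfies 0 ≤ p_j ≤ ε, then ψ(p) ≤ n ψ(c^{(j,ε)}) for every continuous concave function ψ : Δ̄_n → [0, ∞). In particular, ψ(p) ≤ n ψ(ē) for all p ∈ Δ̄_n and all such ψ, where ē = (1/n, …, 1/n) is the barycenter of the simplex. -/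
/-! A nonnegative concave `ψ` satisfies `t ψ(p) ≤ ψ(t p + (1 - t) q)` by dropping the term
`(1 - t) ψ(q) ≥ 0`. If `p_j ≤ ε ≤ 1/n`, then `p/n` lies coordinatewise below the slice center
`c = c^{(j,ε)}`, so `c = p/n + (1 - 1/n) q` for some `q ∈ Δ̄_n`, whence `ψ(p)/n ≤ ψ(c)`.
Every `p ∈ Δ̄_n` has a coordinate `p_j ≤ 1/n`, and `c^{(j,1/n)}` is the barycenter. -/

/-- The open unit simplex `Δ_n = {p ∈ (0,1)^n : p_1 + ⋯ + p_n = 1}`. -/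
def openSimplex (n : ℕ) : Set (Fin n → ℝ) :=
  {p | (∀ i, 0 < p i ∧ p i < 1) ∧ ∑ i, p i = 1}

/-- The closed unit simplex `Δ̄_n`, the closure of `Δ_n` in `ℝ^n`. -/
def closedSimplex (n : ℕ) : Set (Fin n → ℝ) :=
  {p | (∀ i, 0 ≤ p i) ∧ ∑ i, p i = 1}

theorem ConcaveOn.mul_le_of_nonneg {E : Type*} [AddCommGroup E] [Module ℝ E] {s : Set E}
    {ψ : E → ℝ} (hψ : ConcaveOn ℝ s ψ) (hψ0 : ∀ x ∈ s, 0 ≤ ψ x) {x y : E} (hx : x ∈ s)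
    (hy : y ∈ s) {t : ℝ} (ht0 : 0 ≤ t) (ht1 : t ≤ 1) :
    t * ψ x ≤ ψ (t • x + (1 - t) • y) := by
  have h := hψ.2 hx hy ht0 (sub_nonneg.2 ht1) (add_sub_cancel t 1)
  have := mul_nonneg (sub_nonneg.2 ht1) (hψ0 y hy)
  simp only [smul_eq_mul] at h
  linarith

namespace closedSimplex

variable {n : ℕ}

theorem le_one {p : Fin n → ℝ} (hp : p ∈ closedSimplex n) (i : Fin n) : p i ≤ 1 :=
  hp.2 ▸ Finset.single_le_sum (fun k _ => hp.1 k) (Finset.mem_univ i)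

theorem exists_le_inv_card {p : Fin n → ℝ} (hp : p ∈ closedSimplex n) (hn : 0 < n) :
    ∃ j, p j ≤ 1 / n := by
  obtain ⟨j, -, hj⟩ := Finset.exists_le_of_sum_le (s := Finset.univ) (f := p)
    (g := fun _ => 1 / (n : ℝ)) ⟨⟨0, hn⟩, Finset.mem_univ _⟩ (by
      have : (n : ℝ) ≠ 0 := by positivity
      simp [hp.2, this])
  exact ⟨j, hj⟩

theorem exists_smul_add_smul_eq {p c : Fin n → ℝ} (hp : p ∈ closedSimplex n)
    (hc : c ∈ closedSimplex n) {t : ℝ} (ht : t < 1) (hle : t • p ≤ c) :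
    ∃ q ∈ closedSimplex n, t • p + (1 - t) • q = c := by
  have h1t : 1 - t ≠ 0 := (sub_pos.2 ht).ne'
  refine ⟨(1 - t)⁻¹ • (c - t • p), ⟨fun i => ?_, ?_⟩, ?_⟩
  · exact mul_nonneg (inv_nonneg.2 (sub_pos.2 ht).le) (sub_nonneg.2 (hle i))
  · simp only [Pi.smul_apply, Pi.sub_apply, smul_eq_mul, ← Finset.mul_sum,
      Finset.sum_sub_distrib, hc.2, hp.2]
    field_simp
  · rw [smul_smul, mul_inv_cancel₀ h1t, one_smul, add_sub_cancel]

end closedSimplex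

theorem ConcaveOn.mul_le_of_smul_le {n : ℕ} {ψ : (Fin n → ℝ) → ℝ}
    (hψ : ConcaveOn ℝ (closedSimplex n) ψ) (hψ0 : ∀ x ∈ closedSimplex n, 0 ≤ ψ x)
    {p c : Fin n → ℝ} (hp : p ∈ closedSimplex n) (hc : c ∈ closedSimplex n) {t : ℝ}
    (ht0 : 0 ≤ t) (ht1 : t < 1) (hle : t • p ≤ c) : t * ψ p ≤ ψ c := by
  obtain ⟨q, hq, rfl⟩ := closedSimplex.exists_smul_add_smul_eq hp hc ht1 hle
  exact hψ.mul_le_of_nonneg hψ0 hp hq ht0 ht1.le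

/-- `c^{(j,ε)}`, the center of the slice `{p ∈ Δ̄_n : p_j = ε}`. -/
noncomputable def sliceCenter (n : ℕ) (j : Fin n) (ε : ℝ) : Fin n → ℝ :=
  fun i => if i = j then ε else (1 - ε) / (n - 1)

section sliceCenter

variable {n : ℕ} (j : Fin n)

theorem sliceCenter_mem_closedSimplex (hn : 1 < n) {ε : ℝ} (hε0 : 0 ≤ ε) (hε1 : ε ≤ 1) :
    sliceCenter n j ε ∈ closedSimplex n := by
  have hn1 : (0 : ℝ) < n - 1 := sub_pos.2 (by exact_mod_cast hn)
  refine ⟨fun i => ?_, ?_⟩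
  · unfold sliceCenter
    split_ifs
    · exact hε0
    · exact div_nonneg (sub_nonneg.2 hε1) hn1.le
  · rw [← Finset.add_sum_erase _ _ (Finset.mem_univ j)]
    unfold sliceCenter
    rw [Finset.sum_congr rfl fun i hi => if_neg (Finset.ne_of_mem_erase hi)]
    simp only [if_pos, Finset.sum_const, Finset.card_erase_of_mem (Finset.mem_univ j),
      Finset.card_univ, Fintype.card_fin, nsmul_eq_mul]
    push_cast [Nat.cast_sub hn.le]
    field_simp
    ring

theorem inv_card_smul_le_sliceCenter (hn : 1 < n) {p : Fin n → ℝ} (hp : p ∈ closedSimplex n)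
    {ε : ℝ} (hpj : p j ≤ ε) (hε : ε ≤ 1 / n) : (1 / n : ℝ) • p ≤ sliceCenter n j ε := by
  have hn0 : (0 : ℝ) < n := by positivity
  intro i
  simp only [Pi.smul_apply, smul_eq_mul, sliceCenter]
  split_ifs with hij
  · subst hij
    have : 1 / (n : ℝ) ≤ 1 := by rw [div_le_one hn0]; exact_mod_cast hn.le
    nlinarith [hp.1 i]
  · have hn1 : (0 : ℝ) < n - 1 := sub_pos.2 (by exact_mod_cast hn)
    calc 1 / (n : ℝ) * p i ≤ 1 / n * 1 :=
          mul_le_mul_of_nonneg_left (closedSimplex.le_one hp i) (by positivity)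
      _ ≤ (1 - ε) / (n - 1) := by
          rw [mul_one, div_le_div_iff₀ hn0 hn1]
          rw [le_div_iff₀ hn0] at hε
          linarith

theorem sliceCenter_inv_card (hn : 1 < n) : sliceCenter n j (1 / n) = fun _ => (1 / n : ℝ) := by
  have hn1 : (n : ℝ) - 1 ≠ 0 := (sub_pos.2 (by exact_mod_cast hn)).ne'
  have hn0 : (n : ℝ) ≠ 0 := by positivity
  funext i
  unfold sliceCenter
  split_ifs
  · rfl
  · field_simp

theorem ConcaveOn.le_card_mul_sliceCenter (hn : 1 < n) {ψ : (Fin n → ℝ) → ℝ}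
    (hψ : ConcaveOn ℝ (closedSimplex n) ψ) (hψ0 : ∀ x ∈ closedSimplex n, 0 ≤ ψ x)
    {p : Fin n → ℝ} (hp : p ∈ closedSimplex n) {ε : ℝ} (hpj : p j ≤ ε) (hε : ε ≤ 1 / n) :
    ψ p ≤ n * ψ (sliceCenter n j ε) := by
  have hn0 : (0 : ℝ) < n := by positivity
  have hε1 : ε ≤ 1 := hε.trans (by rw [div_le_one hn0]; exact_mod_cast hn.le)
  have hc := sliceCenter_mem_closedSimplex j hn ((hp.1 j).trans hpj) hε1
  have h := hψ.mul_le_of_smul_le hψ0 hp hc (by positivity)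
    ((div_lt_one hn0).2 (by exact_mod_cast hn)) (inv_card_smul_le_sliceCenter j hn hp hpj hε)
  rwa [one_div_mul_eq_div, div_le_iff₀' hn0] at h

end sliceCenter

theorem concave_bound_slice_center_general (n : ℕ) (hn : 2 ≤ n) (j : Fin n)
    (ε : ℝ) (hε' : ε ≤ 1 / n)
    (ψ : (Fin n → ℝ) → ℝ)
    (hconc : ConcaveOn ℝ (closedSimplex n) ψ)
    (hnonneg : ∀ p ∈ closedSimplex n, 0 ≤ ψ p)
    (p : Fin n → ℝ) (hp : p ∈ closedSimplex n) (hpj : p j ≤ ε) :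
    ψ p ≤ n * ψ (fun i => if i = j then ε else (1 - ε) / (n - 1)) ∧
    ∀ p' ∈ closedSimplex n, ψ p' ≤ n * ψ (fun _ => 1 / n) := by
  refine ⟨hconc.le_card_mul_sliceCenter j hn hnonneg hp hpj hε', fun p' hp' => ?_⟩
  obtain ⟨j', hj'⟩ := closedSimplex.exists_le_inv_card hp' (by omega)
  rw [← sliceCenter_inv_card j' hn]
  exact hconc.le_card_mul_sliceCenter j' hn hnonneg hp' hj' le_rfl

/-- for `1 ≤ j ≤ n` and `0 < ε ≤ 1/n`, with `c^{(j,ε)}` the center of the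
slice `p_j = ε`, every continuous nonnegative concave `ψ` on `Δ̄_n` satisfies
`ψ(p) ≤ n ψ(c^{(j,ε)})` whenever `p ∈ Δ̄_n` has `p_j ≤ ε`; in particular
`ψ(p) ≤ n ψ(ē)` for all `p ∈ Δ̄_n`, where `ē` is the barycenter. -/
theorem concave_bound_slice_center (n : ℕ) (hn : 2 ≤ n) (j : Fin n)
    (ε : ℝ) (hε : 0 < ε) (hε' : ε ≤ 1 / n)
    (ψ : (Fin n → ℝ) → ℝ)
    (hcont : ContinuousOn ψ (closedSimplex n))
    (hconc : ConcaveOn ℝ (closedSimplex n) ψ)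
    (hnonneg : ∀ p ∈ closedSimplex n, 0 ≤ ψ p)
    (p : Fin n → ℝ) (hp : p ∈ closedSimplex n) (hpj : p j ≤ ε) :
    ψ p ≤ n * ψ (fun i => if i = j then ε else (1 - ε) / (n - 1)) ∧
    ∀ p' ∈ closedSimplex n, ψ p' ≤ n * ψ (fun _ => 1 / n) :=
  concave_bound_slice_center_general n hn j ε hε' ψ hconc hnonneg p hp hpj
end

section
/- Let n ≥ 2 and M ≥ 0. Then every sequence (ψ_k) of continuous concave functions ψ_k : Δ̄_n → [0, M] has a subsequence that converges, uniformly on every compact subset of Δ_n, to a continuous concave function ψ : Δ̄_n → [0, M]. Equivalently, the set {ψ ∈ C : ψ ≤ M} is compact in the topology of uniform convergence on compact subsets of Δ_n. -/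
/-! If `g ≥ 0` is concave on the simplex and `r • q ≤ p` coordinatewise with `0 ≤ r < 1`, then
`p = r • q + (1 - r) • w` for some `w` in the simplex, hence `r * g q ≤ g p`. Near an interior
point `q` both `r • q ≤ p` and `r • p ≤ q` hold, so `|g p - g q| ≤ (1 - r) * M`: the family is
equicontinuous on the open simplex, and a subsequence converging on a countable dense set converges
uniformly on compact subsets of it. The limit is extended to the closed simplex by its liminf along
rays towards an interior point `c`; the same inequality makes the extension lower semicontinuous,
and comparing `p` with the points `c + r • (q - c)` of the rays makes it upper semicontinuous. -/

open Filter Topology Set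

section Liminf

variable {ι E : Type*} {l : Filter ι} [l.NeBot] {a b : ℝ}

lemma liminf_mem_Icc {u : ι → ℝ} (hu : ∀ᶠ i in l, u i ∈ Icc a b) : liminf u l ∈ Icc a b :=
  ⟨le_liminf_of_le (isCoboundedUnder_ge_of_eventually_le l (hu.mono fun _ h => h.2))
      (hu.mono fun _ h => h.1),
    liminf_le_of_le (isBoundedUnder_of_eventually_ge (hu.mono fun _ h => h.1))
      fun _ hc => (hc.and hu).exists.elim fun _ h => h.1.trans h.2.2⟩

lemma concaveOn_liminf [AddCommGroup E] [Module ℝ E] {s : Set E} {F : ι → E → ℝ}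
    (hF : ∀ᶠ i in l, ConcaveOn ℝ s (F i)) (hFb : ∀ᶠ i in l, MapsTo (F i) s (Icc a b)) :
    ConcaveOn ℝ s fun x => liminf (F · x) l := by
  refine ⟨hF.exists.elim fun _ h => h.1, fun x hx y hy α β hα hβ hαβ => ?_⟩
  have hbdd : ∀ z ∈ s, ∀ᶠ i in l, F i z ∈ Icc a b := fun z hz => hFb.mono fun _ h => h hz
  have hlt : ∀ z ∈ s, ∀ ε > 0, ∀ᶠ i in l, liminf (F · z) l - ε < F i z := fun z hz ε hε =>
    eventually_lt_of_lt_liminf (sub_lt_self _ hε)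
      (isBoundedUnder_of_eventually_ge ((hbdd z hz).mono fun _ h => h.1))
  refine le_of_forall_pos_le_add fun ε hε => ?_
  have hz := hF.exists.elim fun _ h => h.1 hx hy hα hβ hαβ
  have key : ∀ᶠ i in l,
      α * liminf (F · x) l + β * liminf (F · y) l - ε ≤ F i (α • x + β • y) := by
    filter_upwards [hF, hlt x hx ε hε, hlt y hy ε hε] with i hi hix hiy
    have := hi.2 hx hy hα hβ hαβ
    simp only [smul_eq_mul] at this
    nlinarith
  have := le_liminf_of_le
    (isCoboundedUnder_ge_of_eventually_le l ((hbdd _ hz).mono fun _ h => h.2)) key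
  simp only [smul_eq_mul]
  linarith

end Liminf

lemma eventually_mem_Ico_and_lt {u : ℝ → ℝ} {y : ℝ} (hu : ContinuousAt u 1)
    (hy : u 1 < y) : ∀ᶠ r in 𝓝[<] (1 : ℝ), r ∈ Ico (0 : ℝ) 1 ∧ u r < y :=
  Eventually.and (Ico_mem_nhdsLT zero_lt_one)
    ((hu.eventually_lt continuousAt_const hy).filter_mono nhdsWithin_le_nhds)

lemma eventually_smul_le_of_forall_lt {ι : Type*} [Finite ι] {a b : ι → ℝ} {r : ℝ}
    (h : ∀ i, r * a i < b i) : ∀ᶠ x in 𝓝 a, r • x ≤ b :=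
  eventually_all.2 fun i =>
    (((continuous_apply i).const_smul r).continuousAt.eventually_lt continuousAt_const
      (h i)).mono fun _ hx => hx.le

section Radial

variable {E : Type*} [AddCommGroup E] [Module ℝ E] {a b : ℝ} {c p : E} {f g : E → ℝ}
  {s t : Set E}

/-- `liminf_{r → 1⁻} f (c + r • (p - c))`; for concave `f` this is its closure at `p`. -/
noncomputable def radialLiminf (c : E) (f : E → ℝ) (p : E) : ℝ :=
  liminf (fun r => f (AffineMap.homothety c r p)) (𝓝[<] (1 : ℝ))

lemma radialLiminf_mem_Icc (hp : ∀ᶠ r in 𝓝[<] (1 : ℝ), AffineMap.homothety c r p ∈ s)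
    (hf : MapsTo f s (Icc a b)) : radialLiminf c f p ∈ Icc a b :=
  liminf_mem_Icc (hp.mono fun _ hr => hf hr)

lemma radialLiminf_congr (hp : ∀ᶠ r in 𝓝[<] (1 : ℝ), AffineMap.homothety c r p ∈ s)
    (hfg : EqOn f g s) : radialLiminf c f p = radialLiminf c g p :=
  liminf_congr (hp.mono fun _ hr => hfg hr)

lemma radialLiminf_eq_of_continuousWithinAt [TopologicalSpace E] [IsTopologicalAddGroup E]
    [ContinuousSMul ℝ E] (hp : ∀ᶠ r in 𝓝[<] (1 : ℝ), AffineMap.homothety c r p ∈ s)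
    (hf : ContinuousWithinAt f s p) : radialLiminf c f p = f p := by
  have hcont : Continuous fun r : ℝ => AffineMap.homothety c r p := by
    simp only [AffineMap.homothety_apply, vsub_eq_sub, vadd_eq_add]
    fun_prop
  have hray : Tendsto (fun r : ℝ => AffineMap.homothety c r p) (𝓝[<] (1 : ℝ)) (𝓝[s] p) :=
    tendsto_nhdsWithin_iff.2
      ⟨by simpa using (hcont.tendsto 1).mono_left nhdsWithin_le_nhds, hp⟩
  exact (hf.tendsto.comp hray).liminf_eq

lemma concaveOn_radialLiminf (hf : ConcaveOn ℝ s f) (hfb : MapsTo f s (Icc a b))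
    (ht : Convex ℝ t) (hts : ∀ᶠ r in 𝓝[<] (1 : ℝ), MapsTo (AffineMap.homothety c r) t s) :
    ConcaveOn ℝ t (radialLiminf c f) :=
  concaveOn_liminf (hts.mono fun _ hr => (hf.comp_affineMap _).subset hr ht)
    (hts.mono fun _ hr => hfb.comp hr)

end Radial

section Simplex

variable {n : ℕ} {M r : ℝ} {c p q : Fin n → ℝ} {g : (Fin n → ℝ) → ℝ}

lemma convex_closedSimplex : Convex ℝ (closedSimplex n) := convex_stdSimplex ℝ (Fin n)

lemma openSimplex_subset_closedSimplex : openSimplex n ⊆ closedSimplex n :=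
  fun _ hp => ⟨fun i => (hp.1 i).1.le, hp.2⟩

lemma openSimplex_nonempty (hn : 2 ≤ n) : (openSimplex n).Nonempty := by
  have hn' : (1 : ℝ) < n := by exact_mod_cast hn
  refine ⟨fun _ => (n : ℝ)⁻¹, fun _ => ⟨by positivity, inv_lt_one_of_one_lt₀ hn'⟩, ?_⟩
  simp [Finset.card_univ]
  exact mul_inv_cancel₀ (by positivity)

lemma le_one_of_mem_closedSimplex (hp : p ∈ closedSimplex n) (i : Fin n) : p i ≤ 1 :=
  hp.2 ▸ Finset.single_le_sum (fun j _ => hp.1 j) (Finset.mem_univ i)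

lemma homothety_apply_pi (c p : Fin n → ℝ) (r : ℝ) (i : Fin n) :
    AffineMap.homothety c r p i = r * p i + (1 - r) * c i := by
  simp only [AffineMap.homothety_apply, vsub_eq_sub, vadd_eq_add, Pi.add_apply, Pi.smul_apply,
    Pi.sub_apply, smul_eq_mul]
  ring

lemma mapsTo_homothety_openSimplex (hc : c ∈ openSimplex n) (hr : r ∈ Ico (0 : ℝ) 1) :
    MapsTo (AffineMap.homothety c r) (closedSimplex n) (openSimplex n) := by
  intro p hp
  refine ⟨fun i => ?_, ?_⟩
  · have hpi := le_one_of_mem_closedSimplex hp i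
    have := hp.1 i
    have := hc.1 i
    rw [homothety_apply_pi]
    constructor <;> nlinarith [hr.1, hr.2]
  · simp only [homothety_apply_pi, Finset.sum_add_distrib, ← Finset.mul_sum, hp.2, hc.2]
    ring

lemma eventually_mapsTo_homothety_openSimplex (hc : c ∈ openSimplex n) :
    ∀ᶠ r in 𝓝[<] (1 : ℝ), MapsTo (AffineMap.homothety c r) (closedSimplex n) (openSimplex n) :=
  mem_of_superset (Ico_mem_nhdsLT zero_lt_one) fun _ hr => mapsTo_homothety_openSimplex hc hr

lemma ConcaveOn.mul_le_of_smul_le_s5 (hg : ConcaveOn ℝ (closedSimplex n) g)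
    (hg0 : ∀ x ∈ closedSimplex n, 0 ≤ g x) (hp : p ∈ closedSimplex n) (hq : q ∈ closedSimplex n)
    (hr : r ∈ Ico (0 : ℝ) 1) (hqp : r • q ≤ p) : r * g q ≤ g p := by
  have hr1 : 0 < 1 - r := sub_pos.2 hr.2
  set w := (1 - r)⁻¹ • (p - r • q)
  have hw : w ∈ closedSimplex n := by
    refine ⟨fun i => ?_, ?_⟩
    · simpa [w] using mul_nonneg (inv_nonneg.2 hr1.le) (sub_nonneg.2 (hqp i))
    · simp only [w, Pi.smul_apply, Pi.sub_apply, smul_eq_mul, ← Finset.mul_sum,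
        Finset.sum_sub_distrib, hp.2, hq.2]
      field_simp
  have hpw : r • q + (1 - r) • w = p := by
    simp only [w, smul_inv_smul₀ hr1.ne']
    abel
  have := hg.2 hq hw hr.1 hr1.le (by ring)
  rw [hpw, smul_eq_mul, smul_eq_mul] at this
  nlinarith [hg0 w hw]

lemma ConcaveOn.abs_sub_le_of_smul_le (hg : ConcaveOn ℝ (closedSimplex n) g)
    (hgb : MapsTo g (closedSimplex n) (Icc 0 M)) (hp : p ∈ closedSimplex n)
    (hq : q ∈ closedSimplex n) (hr : r ∈ Ico (0 : ℝ) 1) (hqp : r • q ≤ p) (hpq : r • p ≤ q) :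
    |g p - g q| ≤ (1 - r) * M := by
  have hg0 : ∀ x ∈ closedSimplex n, 0 ≤ g x := fun x hx => (hgb hx).1
  have h1 := hg.mul_le_of_smul_le_s5 hg0 hp hq hr hqp
  have h2 := hg.mul_le_of_smul_le_s5 hg0 hq hp hr hpq
  have hr1 : 0 ≤ 1 - r := sub_nonneg.2 hr.2.le
  rw [abs_sub_le_iff]
  constructor <;> nlinarith [mul_le_mul_of_nonneg_left (hgb hp).2 hr1,
    mul_le_mul_of_nonneg_left (hgb hq).2 hr1]

lemma eventually_smul_le_nhdsWithin_closedSimplex (hq : q ∈ closedSimplex n) (hr : r < 1) :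
    ∀ᶠ x in 𝓝[closedSimplex n] q, r • q ≤ x := by
  refine eventually_all.2 fun i => ?_
  rcases (hq.1 i).eq_or_lt with hqi | hqi
  · filter_upwards [self_mem_nhdsWithin] with x hx
    simpa [← hqi] using hx.1 i
  · exact (continuousAt_const.eventually_lt (continuous_apply i).continuousAt
      (by simpa using mul_lt_of_lt_one_left hqi hr)).filter_mono nhdsWithin_le_nhds
        |>.mono fun _ hx => hx.le

theorem equicontinuousWithinAt_of_concaveOn {ι : Type*} {F : ι → (Fin n → ℝ) → ℝ}
    (hF : ∀ i, ConcaveOn ℝ (closedSimplex n) (F i))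
    (hFb : ∀ i, MapsTo (F i) (closedSimplex n) (Icc 0 M)) (hq : q ∈ openSimplex n) :
    EquicontinuousWithinAt F (closedSimplex n) q := by
  have hqS := openSimplex_subset_closedSimplex hq
  refine Metric.uniformity_basis_dist.equicontinuousWithinAt_iff_right.2 fun ε hε => ?_
  obtain ⟨r, hr, hrM⟩ := (eventually_mem_Ico_and_lt (u := fun r => (1 - r) * M)
    (by fun_prop) (by simpa using hε)).exists
  have hpq : ∀ᶠ p in 𝓝 q, r • p ≤ q :=
    eventually_smul_le_of_forall_lt fun i => mul_lt_of_lt_one_left (hq.1 i).1 hr.2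
  filter_upwards [eventually_smul_le_nhdsWithin_closedSimplex hqS hr.2,
    hpq.filter_mono nhdsWithin_le_nhds, self_mem_nhdsWithin] with p hqp hpq hp i
  rw [Real.dist_eq, abs_sub_comm]
  exact ((hF i).abs_sub_le_of_smul_le (hFb i) hp hqS hr hqp hpq).trans_lt hrM

lemma ConcaveOn.continuousWithinAt_of_mem_openSimplex (hg : ConcaveOn ℝ (closedSimplex n) g)
    (hgb : MapsTo g (closedSimplex n) (Icc 0 M)) (hq : q ∈ openSimplex n) :
    ContinuousWithinAt g (closedSimplex n) q :=
  (equicontinuousWithinAt_of_concaveOn (F := fun _ : Unit => g) (fun _ => hg) (fun _ => hgb)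
    hq).continuousWithinAt ()

lemma ConcaveOn.lowerSemicontinuousWithinAt_closedSimplex
    (hg : ConcaveOn ℝ (closedSimplex n) g) (hg0 : ∀ x ∈ closedSimplex n, 0 ≤ g x)
    (hq : q ∈ closedSimplex n) : LowerSemicontinuousWithinAt g (closedSimplex n) q := by
  intro y hy
  obtain ⟨r, hr, hyr⟩ := (eventually_mem_Ico_and_lt (u := fun r => y - r * g q) (y := 0)
    (by fun_prop) (by simpa using hy)).exists
  filter_upwards [eventually_smul_le_nhdsWithin_closedSimplex hq hr.2, self_mem_nhdsWithin]
    with p hqp hp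
  linarith [hg.mul_le_of_smul_le_s5 hg0 hp hq hr hqp]

lemma ConcaveOn.upperSemicontinuousWithinAt_closedSimplex (hc : c ∈ openSimplex n)
    (hg : ConcaveOn ℝ (closedSimplex n) g) (hgb : MapsTo g (closedSimplex n) (Icc 0 M))
    (hq : q ∈ closedSimplex n) (hrad : radialLiminf c g q ≤ g q) :
    UpperSemicontinuousWithinAt g (closedSimplex n) q := by
  intro y hy
  obtain ⟨y', hqy', hy'y⟩ := exists_between hy
  have hray : ∀ᶠ r in 𝓝[<] (1 : ℝ), AffineMap.homothety c r q ∈ closedSimplex n :=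
    (eventually_mapsTo_homothety_openSimplex hc).mono fun _ hr =>
      openSimplex_subset_closedSimplex (hr hq)
  have hfreq : ∃ᶠ r in 𝓝[<] (1 : ℝ), g (AffineMap.homothety c r q) < y' :=
    frequently_lt_of_liminf_lt
      (isCoboundedUnder_ge_of_eventually_le _ (hray.mono fun _ hr => (hgb hr).2))
      (hrad.trans_lt hqy')
  obtain ⟨r, hry', hr, hry⟩ := (hfreq.and_eventually (eventually_mem_Ico_and_lt
    (u := fun r => (1 - r) * M + y') (by fun_prop) (by simpa using hy'y))).exists
  have hw := openSimplex_subset_closedSimplex (mapsTo_homothety_openSimplex hc hr hq)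
  have hdom : ∀ᶠ p in 𝓝 q, r • p ≤ AffineMap.homothety c r q :=
    eventually_smul_le_of_forall_lt fun i => by
      rw [homothety_apply_pi]
      nlinarith [(hc.1 i).1, hr.2]
  filter_upwards [hdom.filter_mono nhdsWithin_le_nhds, self_mem_nhdsWithin] with p hpw hp
  calc g p = r * g p + (1 - r) * g p := by ring
    _ ≤ g (AffineMap.homothety c r q) + (1 - r) * M :=
      add_le_add (hg.mul_le_of_smul_le_s5 (fun _ hx => (hgb hx).1) hw hp hr hpw)
        (mul_le_mul_of_nonneg_left (hgb hp).2 (sub_nonneg.2 hr.2.le))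
    _ < y := by linarith

theorem ConcaveOn.continuousOn_closedSimplex (hc : c ∈ openSimplex n)
    (hg : ConcaveOn ℝ (closedSimplex n) g) (hgb : MapsTo g (closedSimplex n) (Icc 0 M))
    (hrad : ∀ q ∈ closedSimplex n, radialLiminf c g q ≤ g q) :
    ContinuousOn g (closedSimplex n) := fun q hq =>
  continuousWithinAt_iff_lower_upperSemicontinuousWithinAt.2
    ⟨hg.lowerSemicontinuousWithinAt_closedSimplex (fun _ hx => (hgb hx).1) hq,
      hg.upperSemicontinuousWithinAt_closedSimplex hc hgb hq (hrad q hq)⟩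

theorem ConcaveOn.exists_continuousOn_closedSimplex_eqOn (hc : c ∈ openSimplex n)
    {f : (Fin n → ℝ) → ℝ} (hf : ConcaveOn ℝ (closedSimplex n) f)
    (hfb : MapsTo f (closedSimplex n) (Icc 0 M)) :
    ∃ g, ContinuousOn g (closedSimplex n) ∧ ConcaveOn ℝ (closedSimplex n) g ∧
      MapsTo g (closedSimplex n) (Icc 0 M) ∧ EqOn g f (openSimplex n) := by
  have hray : ∀ p ∈ closedSimplex n,
      ∀ᶠ r in 𝓝[<] (1 : ℝ), AffineMap.homothety c r p ∈ openSimplex n := fun p hp =>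
    (eventually_mapsTo_homothety_openSimplex hc).mono fun _ hr => hr hp
  have hgf : EqOn (radialLiminf c f) f (openSimplex n) := fun q hq =>
    radialLiminf_eq_of_continuousWithinAt
      ((hray q (openSimplex_subset_closedSimplex hq)).mono fun _ hr =>
        openSimplex_subset_closedSimplex hr)
      (hf.continuousWithinAt_of_mem_openSimplex hfb hq)
  have hgb : MapsTo (radialLiminf c f) (closedSimplex n) (Icc 0 M) := fun p hp =>
    radialLiminf_mem_Icc ((hray p hp).mono fun _ hr => openSimplex_subset_closedSimplex hr) hfb
  have hgc : ConcaveOn ℝ (closedSimplex n) (radialLiminf c f) :=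
    concaveOn_radialLiminf hf hfb convex_closedSimplex
      ((eventually_mapsTo_homothety_openSimplex hc).mono fun _ hr =>
        hr.mono_right openSimplex_subset_closedSimplex)
  refine ⟨radialLiminf c f, hgc.continuousOn_closedSimplex hc hgb fun p hp => ?_, hgc, hgb, hgf⟩
  rw [radialLiminf_congr (hray p hp) hgf]

end Simplex

section Sequences

variable {X α : Type*}

lemma exists_strictMono_tendsto_of_countable [TopologicalSpace α] [FirstCountableTopology α]
    {D : Set X} (hD : D.Countable) {K : Set α} (hK : IsCompact K) {F : ℕ → X → α}
    (hF : ∀ k, MapsTo (F k) D K) :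
    ∃ φ : ℕ → ℕ, StrictMono φ ∧ ∀ x ∈ D, ∃ l, Tendsto (fun k => F (φ k) x) atTop (𝓝 l) := by
  have := hD.to_subtype
  have := isCompact_iff_compactSpace.1 hK
  obtain ⟨a, φ, hφ, ha⟩ := CompactSpace.tendsto_subseq fun k (x : D) => (⟨F k x, hF k x.2⟩ : K)
  exact ⟨φ, hφ, fun x hx => ⟨a ⟨x, hx⟩,
    (continuous_subtype_val.tendsto _).comp ((continuous_apply _).tendsto _ |>.comp ha)⟩⟩

lemma EquicontinuousWithinAt.cauchySeq_of_mem_closure [TopologicalSpace X] [PseudoMetricSpace α]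
    {F : ℕ → X → α} {S D : Set X} {x : X} (hF : EquicontinuousWithinAt F S x) (hDS : D ⊆ S)
    (hx : x ∈ closure D) (hD : ∀ y ∈ D, CauchySeq (F · y)) : CauchySeq (F · x) := by
  refine Metric.cauchySeq_iff.2 fun ε hε => ?_
  have hnear : ∀ᶠ y in 𝓝[D] x, ∀ k, dist (F k x) (F k y) < ε / 3 :=
    (Metric.uniformity_basis_dist.equicontinuousWithinAt_iff_right.1 hF (ε / 3)
      (by positivity)).filter_mono (nhdsWithin_mono x hDS)
  have := mem_closure_iff_nhdsWithin_neBot.1 hx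
  obtain ⟨y, hxy, hy⟩ := (hnear.and self_mem_nhdsWithin).exists
  obtain ⟨N, hN⟩ := Metric.cauchySeq_iff.1 (hD y hy) (ε / 3) (by positivity)
  refine ⟨N, fun j hj k hk => ?_⟩
  calc dist (F j x) (F k x)
        ≤ dist (F j x) (F j y) + dist (F j y) (F k y) + dist (F k y) (F k x) :=
          dist_triangle4 _ _ _ _
    _ < ε / 3 + ε / 3 + ε / 3 := by
        gcongr
        exacts [hxy j, hN j hj k hk, dist_comm (F k y) (F k x) ▸ hxy k]
    _ = ε := by ring

lemma EquicontinuousOn.tendstoUniformlyOn_of_tendsto [TopologicalSpace X] [UniformSpace α]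
    {ι : Type*} {F : ι → X → α} {f : X → α} {l : Filter ι} {K : Set X} (hK : IsCompact K)
    (hF : EquicontinuousOn F K) (h : ∀ x ∈ K, Tendsto (F · x) l (𝓝 (f x))) :
    TendstoUniformlyOn F f l K := by
  have := (EquicontinuousOn.tendsto_uniformOnFun_iff_pi' (𝔖 := {K}) (by simpa) (by simpa) l f).2
    (by simpa [tendsto_pi_nhds] using fun x hx => h x hx)
  exact UniformOnFun.tendsto_iff_tendstoUniformlyOn.1 this K rfl

end Sequences

theorem bounded_concave_functions_compact_general (n : ℕ) (hn : 2 ≤ n) (M : ℝ)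
    (ψ : ℕ → (Fin n → ℝ) → ℝ)
    (hconc : ∀ k, ConcaveOn ℝ (closedSimplex n) (ψ k))
    (hbdd : ∀ k, ∀ p ∈ closedSimplex n, ψ k p ∈ Set.Icc 0 M) :
    ∃ φ : ℕ → ℕ, StrictMono φ ∧ ∃ ψlim : (Fin n → ℝ) → ℝ,
      ContinuousOn ψlim (closedSimplex n) ∧
      ConcaveOn ℝ (closedSimplex n) ψlim ∧
      (∀ p ∈ closedSimplex n, ψlim p ∈ Set.Icc 0 M) ∧
      ∀ K : Set (Fin n → ℝ), IsCompact K → K ⊆ openSimplex n →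
        TendstoUniformlyOn (fun k => ψ (φ k)) ψlim Filter.atTop K := by
  obtain ⟨c, hc⟩ := openSimplex_nonempty hn
  have hψb : ∀ k, MapsTo (ψ k) (closedSimplex n) (Icc 0 M) := fun k p hp => hbdd k p hp
  obtain ⟨D, hDO, hDc, hOD⟩ :=
    (TopologicalSpace.IsSeparable.of_separableSpace (openSimplex n)).exists_countable_dense_subset
  have hDS := hDO.trans openSimplex_subset_closedSimplex
  obtain ⟨φ, hφ, hφD⟩ := exists_strictMono_tendsto_of_countable hDc isCompact_Icc
    fun k => (hψb k).mono_left hDS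
  have hequi : ∀ q ∈ openSimplex n,
      EquicontinuousWithinAt (fun k => ψ (φ k)) (closedSimplex n) q := fun q hq =>
    equicontinuousWithinAt_of_concaveOn (fun k => hconc (φ k)) (fun k => hψb (φ k)) hq
  set ψ₀ := fun p => liminf (fun k => ψ (φ k) p) atTop
  have hlim : ∀ q ∈ openSimplex n, Tendsto (fun k => ψ (φ k) q) atTop (𝓝 (ψ₀ q)) := by
    intro q hq
    obtain ⟨l, hl⟩ := cauchySeq_tendsto_of_complete <|
      (hequi q hq).cauchySeq_of_mem_closure hDS (hOD hq)
        fun y hy => (hφD y hy).elim fun _ h => h.cauchySeq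
    rwa [show ψ₀ q = l from hl.liminf_eq]
  obtain ⟨g, hgcont, hgconc, hgb, hgψ₀⟩ := ConcaveOn.exists_continuousOn_closedSimplex_eqOn hc
    (concaveOn_liminf (l := atTop) (.of_forall fun k => hconc (φ k))
      (.of_forall fun k => hψb (φ k)))
    (fun p hp => liminf_mem_Icc (.of_forall fun k => hψb (φ k) hp))
  refine ⟨φ, hφ, g, hgcont, hgconc, fun p hp => hgb hp, fun K hK hKO => ?_⟩
  refine EquicontinuousOn.tendstoUniformlyOn_of_tendsto hK
    (fun q hq => (hequi q (hKO hq)).mono (hKO.trans openSimplex_subset_closedSimplex)) ?_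
  exact fun q hq => hgψ₀ (hKO hq) ▸ hlim q (hKO hq)

/-- every sequence of continuous concave functions `Δ̄_n → [0, M]` has a
subsequence converging, uniformly on every compact subset of `Δ_n`, to a continuous
concave function `Δ̄_n → [0, M]`; i.e. `{ψ ∈ C : ψ ≤ M}` is compact in the topology of
uniform convergence on compact subsets of `Δ_n`. -/
theorem bounded_concave_functions_compact (n : ℕ) (hn : 2 ≤ n) (M : ℝ) (hM : 0 ≤ M)
    (ψ : ℕ → (Fin n → ℝ) → ℝ)
    (hcont : ∀ k, ContinuousOn (ψ k) (closedSimplex n))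
    (hconc : ∀ k, ConcaveOn ℝ (closedSimplex n) (ψ k))
    (hbdd : ∀ k, ∀ p ∈ closedSimplex n, ψ k p ∈ Set.Icc 0 M) :
    ∃ φ : ℕ → ℕ, StrictMono φ ∧ ∃ ψlim : (Fin n → ℝ) → ℝ,
      ContinuousOn ψlim (closedSimplex n) ∧
      ConcaveOn ℝ (closedSimplex n) ψlim ∧
      (∀ p ∈ closedSimplex n, ψlim p ∈ Set.Icc 0 M) ∧
      ∀ K : Set (Fin n → ℝ), IsCompact K → K ⊆ openSimplex n →
        TendstoUniformlyOn (fun k => ψ (φ k)) ψlim Filter.atTop K :=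
  bounded_concave_functions_compact_general n hn M ψ hconc hbdd
end

section
/- Let n ≥ 2, let h : (0,∞)^n → [0,∞) be measurable, locally integrable and homogeneous of order α (i.e., h(κx) = κ^α h(x) for κ > 0) with n + α > 0, and fix p ∈ Δ_n with 0 < ∫_{R(p,1)} h(y) dy < ∞. Let X be a nonnegative real random variable with ℙ(X ≥ x) = exp(−∫_{R(p,x)} h(y) dy) for every x > 0. Then ∫_{R(p,x)} h(y) dy = x^{n+α} ∫_{R(p,1)} h(y) dy for all x > 0, the random variable X^{n+α} is exponentially distributed with rate ∫_{R(p,1)} h(y) dy, and 𝔼[X] = Γ(1/(n+α) + 1) · (∫_{R(p,1)} h(y) dy)^{−1/(n+α)}. -/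
open MeasureTheory

/-- The open positive quadrant `(0,∞)^n`. -/
def quadrant (n : ℕ) : Set (Fin n → ℝ) := {x | ∀ i, 0 < x i}

/-- The region `R(p,a) = {x ∈ (0,∞)^n : ⟨p,x⟩ < a}`. -/
def Rset (n : ℕ) (p : Fin n → ℝ) (a : ℝ) : Set (Fin n → ℝ) :=
  {x | (∀ i, 0 < x i) ∧ ∑ i, p i * x i < a}

/-!
Homogeneity of `h` and the dilation `R(p,x) = x • R(p,1)` give `∫_{R(p,x)} h = x^{n+α} I` with
`I = ∫_{R(p,1)} h`, so `ℙ(X ≥ x) = exp(-I x^{n+α})`: `X` is Weibull distributed. Then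
`ℙ(X^{n+α} ≥ t) = exp(-I t)`, and a law on `ℝ` is determined by the masses of the half-lines
`[t, ∞)`. Finally the layer-cake formula `𝔼 X = ∫₀^∞ ℙ(X ≥ t) dt = ∫₀^∞ exp(-I t^{n+α}) dt` is a
Gamma integral.
-/

open Set Real ProbabilityTheory
open scoped Pointwise

theorem Rset_eq_smul (n : ℕ) (p : Fin n → ℝ) {x : ℝ} (hx : 0 < x) :
    Rset n p x = x • Rset n p 1 := by
  ext y
  simp only [Rset, mem_smul_set_iff_inv_smul_mem₀ hx.ne', mem_ofPred_eq, Pi.smul_apply,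
    smul_eq_mul, mul_left_comm (p _), ← Finset.mul_sum, inv_mul_lt_iff₀ hx, mul_one,
    mul_pos_iff_of_pos_left (inv_pos.2 hx)]

theorem measurableSet_Rset (n : ℕ) (p : Fin n → ℝ) (a : ℝ) : MeasurableSet (Rset n p a) := by
  unfold Rset
  measurability

theorem setIntegral_smul_of_homogeneous {n : ℕ} {α : ℝ} {h : (Fin n → ℝ) → ℝ}
    (hhom : ∀ κ : ℝ, 0 < κ → ∀ x ∈ quadrant n, h (κ • x) = κ ^ α * h x)
    {S : Set (Fin n → ℝ)} (hS : MeasurableSet S) (hSq : S ⊆ quadrant n) {x : ℝ} (hx : 0 < x) :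
    ∫ y in x • S, h y = x ^ ((n : ℝ) + α) * ∫ y in S, h y := by
  have hscale := Measure.setIntegral_comp_smul_of_pos volume h S hx
  rw [Module.finrank_fin_fun, smul_eq_mul,
    setIntegral_congr_fun hS fun y hy => hhom x hx y (hSq hy), integral_const_mul] at hscale
  rw [rpow_add hx, rpow_natCast, mul_assoc, hscale, ← mul_assoc,
    mul_inv_cancel₀ (pow_pos hx n).ne', one_mul]

namespace ProbabilityTheory

theorem expMeasure_singleton (r x : ℝ) : expMeasure r {x} = 0 :=
  withDensity_absolutelyContinuous _ _ Real.volume_singleton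

theorem expMeasure_Ici_of_nonneg {r t : ℝ} (hr : 0 < r) (ht : 0 ≤ t) :
    expMeasure r (Ici t) = ENNReal.ofReal (exp (-(r * t))) := by
  have := isProbabilityMeasure_expMeasure hr
  have hIic : expMeasure r (Iic t) = ENNReal.ofReal (1 - exp (-(r * t))) := by
    rw [← ofReal_cdf, cdf_expMeasure_eq hr, if_pos ht]
  have hexp_le : exp (-(r * t)) ≤ 1 := exp_le_one_iff.2 (by nlinarith)
  rw [← compl_Iio, prob_compl_eq_one_sub measurableSet_Iio,
    measure_congr (Iio_ae_eq_Iic' (expMeasure_singleton r t)), hIic, ← ENNReal.ofReal_one,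
    ← ENNReal.ofReal_sub _ (sub_nonneg.2 hexp_le), sub_sub_cancel]

theorem expMeasure_Ici_of_nonpos {r t : ℝ} (hr : 0 < r) (ht : t ≤ 0) :
    expMeasure r (Ici t) = 1 := by
  have := isProbabilityMeasure_expMeasure hr
  refine le_antisymm prob_le_one ?_
  calc (1 : ENNReal) = expMeasure r (Ici 0) := by
        rw [expMeasure_Ici_of_nonneg hr le_rfl, mul_zero, neg_zero, exp_zero, ENNReal.ofReal_one]
    _ ≤ expMeasure r (Ici t) := measure_mono (Ici_subset_Ici.2 ht)

variable {Ω : Type*} [MeasurableSpace Ω] {P : Measure Ω} {X : Ω → ℝ} {c β : ℝ}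

theorem map_eq_expMeasure_of_measure_le [IsProbabilityMeasure P] (hc : 0 < c) (hX : Measurable X)
    (hX0 : ∀ ω, 0 ≤ X ω)
    (htail : ∀ t : ℝ, 0 < t → P {ω | t ≤ X ω} = ENNReal.ofReal (exp (-(c * t)))) :
    P.map X = expMeasure c := by
  have := isProbabilityMeasure_expMeasure hc
  refine Measure.ext_of_Ici _ _ fun t => ?_
  rw [Measure.map_apply hX measurableSet_Ici]
  rcases le_or_gt t 0 with ht | ht
  · have huniv : X ⁻¹' Ici t = univ := eq_univ_of_forall fun ω => (ht.trans (hX0 ω) :)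
    rw [huniv, measure_univ, expMeasure_Ici_of_nonpos hc ht]
  · exact (htail t ht).trans (expMeasure_Ici_of_nonneg hc ht.le).symm

theorem measure_le_rpow_eq (hβ : 0 < β) (hX0 : ∀ ω, 0 ≤ X ω)
    (htail : ∀ x : ℝ, 0 < x → P {ω | x ≤ X ω} = ENNReal.ofReal (exp (-(c * x ^ β))))
    {t : ℝ} (ht : 0 < t) : P {ω | t ≤ X ω ^ β} = ENNReal.ofReal (exp (-(c * t))) := by
  have hroot : {ω | t ≤ X ω ^ β} = {ω | t ^ β⁻¹ ≤ X ω} := by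
    ext ω
    exact (rpow_inv_le_iff_of_pos ht.le (hX0 ω) hβ).symm
  rw [hroot, htail _ (rpow_pos_of_pos ht _), rpow_inv_rpow ht.le hβ.ne']

theorem integral_eq_of_measure_le_eq_exp_neg_mul_rpow [IsProbabilityMeasure P]
    (hc : 0 < c) (hβ : 0 < β) (hX : Measurable X) (hX0 : ∀ ω, 0 ≤ X ω)
    (htail : ∀ x : ℝ, 0 < x → P {ω | x ≤ X ω} = ENNReal.ofReal (exp (-(c * x ^ β)))) :
    ∫ ω, X ω ∂P = Gamma (1 / β + 1) * c ^ (-(1 / β)) := by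
  have hX0' : 0 ≤ᵐ[P] X := Filter.Eventually.of_forall hX0
  have hint : IntegrableOn (fun x : ℝ => exp (-(c * x ^ β))) (Ioi 0) := by
    simpa only [rpow_zero, one_mul, neg_mul] using
      integrableOn_rpow_mul_exp_neg_mul_rpow neg_one_lt_zero hβ hc
  rw [integral_eq_lintegral_of_nonneg_ae hX0' hX.aestronglyMeasurable,
    lintegral_eq_lintegral_meas_le P hX0' hX.aemeasurable,
    setLIntegral_congr_fun measurableSet_Ioi htail,
    ← ofReal_integral_eq_lintegral_ofReal hint (Filter.Eventually.of_forall fun _ => (exp_pos _).le),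
    ENNReal.toReal_ofReal (integral_nonneg fun _ => (exp_pos _).le)]
  simp_rw [← neg_mul]
  rw [integral_exp_neg_mul_rpow hβ hc, neg_div, mul_comm]

end ProbabilityTheory

theorem one_point_distribution_general (n : ℕ) (α : ℝ) (hα : 0 < (n : ℝ) + α)
    (h : (Fin n → ℝ) → ℝ)
    (hhom : ∀ κ : ℝ, 0 < κ → ∀ x ∈ quadrant n, h (κ • x) = κ ^ α * h x)
    (p : Fin n → ℝ)
    (hIpos : 0 < ∫ y in Rset n p 1, h y)
    {Ω : Type*} [MeasurableSpace Ω] (P : Measure Ω) [IsProbabilityMeasure P]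
    (X : Ω → ℝ) (hXmeas : Measurable X) (hXnonneg : ∀ ω, 0 ≤ X ω)
    (htail : ∀ x : ℝ, 0 < x →
      P {ω | x ≤ X ω} = ENNReal.ofReal (Real.exp (-∫ y in Rset n p x, h y))) :
    (∀ x : ℝ, 0 < x →
      ∫ y in Rset n p x, h y = x ^ ((n : ℝ) + α) * ∫ y in Rset n p 1, h y) ∧
    Measure.map (fun ω => X ω ^ ((n : ℝ) + α)) P =
      ProbabilityTheory.expMeasure (∫ y in Rset n p 1, h y) ∧
    ∫ ω, X ω ∂P =
      Real.Gamma (1 / ((n : ℝ) + α) + 1) *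
        (∫ y in Rset n p 1, h y) ^ (-(1 / ((n : ℝ) + α))) := by
  set I := ∫ y in Rset n p 1, h y
  have hscaling : ∀ x : ℝ, 0 < x → ∫ y in Rset n p x, h y = x ^ ((n : ℝ) + α) * I :=
    fun x hx => by
      rw [Rset_eq_smul n p hx]
      exact setIntegral_smul_of_homogeneous hhom (measurableSet_Rset n p 1) (fun _ hy => hy.1) hx
  have hweibull : ∀ x : ℝ, 0 < x →
      P {ω | x ≤ X ω} = ENNReal.ofReal (exp (-(I * x ^ ((n : ℝ) + α)))) := fun x hx => by
    rw [htail x hx, hscaling x hx, mul_comm]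
  have hlaw := map_eq_expMeasure_of_measure_le hIpos (hXmeas.pow_const _)
    (fun ω => rpow_nonneg (hXnonneg ω) _) fun t ht => measure_le_rpow_eq hα hXnonneg hweibull ht
  exact ⟨hscaling, hlaw,
    integral_eq_of_measure_le_eq_exp_neg_mul_rpow hIpos hα hXmeas hXnonneg hweibull⟩

/-- with `h ≥ 0` measurable, locally integrable and homogeneous of
order `α` with `n + α > 0`, `p ∈ Δ_n` with `0 < ∫_{R(p,1)} h < ∞`, and `X ≥ 0` a
random variable with `ℙ(X ≥ x) = exp(−∫_{R(p,x)} h)` for `x > 0`, one has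
`∫_{R(p,x)} h = x^{n+α} ∫_{R(p,1)} h`, `X^{n+α}` is exponentially distributed with
rate `∫_{R(p,1)} h`, and `𝔼[X] = Γ(1/(n+α)+1)·(∫_{R(p,1)} h)^{−1/(n+α)}`. -/
theorem one_point_distribution (n : ℕ) (hn : 2 ≤ n) (α : ℝ) (hα : 0 < (n : ℝ) + α)
    (h : (Fin n → ℝ) → ℝ) (hhmeas : Measurable h) (hhnonneg : ∀ x ∈ quadrant n, 0 ≤ h x)
    (hloc : ∀ A : Set (Fin n → ℝ), A ⊆ quadrant n → MeasurableSet A →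
      Bornology.IsBounded A → IntegrableOn h A volume)
    (hhom : ∀ κ : ℝ, 0 < κ → ∀ x ∈ quadrant n, h (κ • x) = κ ^ α * h x)
    (p : Fin n → ℝ) (hp : p ∈ openSimplex n)
    (hIpos : 0 < ∫ y in Rset n p 1, h y)
    {Ω : Type*} [MeasurableSpace Ω] (P : Measure Ω) [IsProbabilityMeasure P]
    (X : Ω → ℝ) (hXmeas : Measurable X) (hXnonneg : ∀ ω, 0 ≤ X ω)
    (htail : ∀ x : ℝ, 0 < x →
      P {ω | x ≤ X ω} = ENNReal.ofReal (Real.exp (-∫ y in Rset n p x, h y))) :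
    (∀ x : ℝ, 0 < x →
      ∫ y in Rset n p x, h y = x ^ ((n : ℝ) + α) * ∫ y in Rset n p 1, h y) ∧
    Measure.map (fun ω => X ω ^ ((n : ℝ) + α)) P =
      ProbabilityTheory.expMeasure (∫ y in Rset n p 1, h y) ∧
    ∫ ω, X ω ∂P =
      Real.Gamma (1 / ((n : ℝ) + α) + 1) *
        (∫ y in Rset n p 1, h y) ^ (-(1 / ((n : ℝ) + α))) :=
  one_point_distribution_general n α hα h hhom p hIpos P X hXmeas hXnonneg htail
end
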